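/- Let R be a ring, σ an automorphism of R, δ a σ-derivation, S = R[x; σ, δ], and M a right R-module. For every nonzero m ∈ M ⊗_R S there exists r ∈ R such that mr is a nonzero good polynomial. -/
import Mathlib


open MulOpposite

/-- `δ` is a `σ`-derivation of the ring `R`. -/
def IsSigmaDeriv {R : Type} [Ring R] (σ : R ≃+* R) (δ : R → R) : Prop :=
  (∀ a b, δ (a + b) = δ a + δ b) ∧ ∀ a b, δ (a * b) = σ a * δ b + δ a * b

/-- A presentation of the skew polynomial ring `S = R[x; σ, δ]`: `S` is a ring containing an
image of `R` via `ι`, with an element `x` satisfying `x·r = σ(r)·x + δ(r)`, and `S` is free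
as a left `R`-module with basis the powers of `x`. -/
structure SkewPoly (R S : Type) [Ring R] [Ring S] (σ : R ≃+* R) (δ : R → R) : Type where
  ι : R →+* S
  x : S
  comm : ∀ r : R, x * ι r = ι (σ r) * x + ι (δ r)
  basis : Function.Bijective fun c : ℕ →₀ R => c.sum fun i a => ι a * x ^ i

/-- A presentation of the induced right `S`-module `M ⊗_R S` of a right `R`-module `M`
(right modules are encoded as modules over the opposite ring): `N` is a right `S`-module
containing `M` via `j`, compatibly with the right `R`-actions, and every element of `N` is
uniquely a polynomial `∑ (j mᵢ)·xⁱ` with coefficients in `M`. -/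
structure Induced (R S M N : Type) [Ring R] [Ring S] [AddCommGroup M] [Module Rᵐᵒᵖ M]
    [AddCommGroup N] [Module Sᵐᵒᵖ N] {σ : R ≃+* R} {δ : R → R}
    (sp : SkewPoly R S σ δ) : Type where
  j : M →+ N
  j_smul : ∀ (r : R) (m : M), j (op r • m) = op (sp.ι r) • j m
  free : Function.Bijective fun c : ℕ →₀ M => c.sum fun i m => op (sp.x ^ i) • j m

variable {R S M N : Type} [Ring R] [Ring S] [AddCommGroup M] [Module Rᵐᵒᵖ M]
  [AddCommGroup N] [Module Sᵐᵒᵖ N] {σ : R ≃+* R} {δ : R → R}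

/-- The polynomial `∑ (j mᵢ)·xⁱ` in `M ⊗_R S` with coefficient family `c`. -/
def pol (sp : SkewPoly R S σ δ) (im : Induced R S M N sp) (c : ℕ →₀ M) : N :=
  c.sum fun i m => op (sp.x ^ i) • im.j m

/-- `ν ∈ M ⊗_R S` has degree exactly `k`. -/
def DegEq (sp : SkewPoly R S σ δ) (im : Induced R S M N sp) (ν : N) (k : ℕ) : Prop :=
  ∃ c : ℕ →₀ M, pol sp im c = ν ∧ c k ≠ 0 ∧ ∀ i, k < i → c i = 0

/-- `ν` is a good polynomial of degree `k`: whenever `ν·r ≠ 0` for `r ∈ R`,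
`deg (ν·r) = deg ν = k`. -/
def GoodAt (sp : SkewPoly R S σ δ) (im : Induced R S M N sp) (ν : N) (k : ℕ) : Prop :=
  DegEq sp im ν k ∧ ∀ r : R, op (sp.ι r) • ν ≠ 0 → DegEq sp im (op (sp.ι r) • ν) k

/-- `ν` is a good polynomial. -/
def Good (sp : SkewPoly R S σ δ) (im : Induced R S M N sp) (ν : N) : Prop :=
  ∃ k, GoodAt sp im ν k

lemma pol_zero (sp : SkewPoly R S σ δ) (im : Induced R S M N sp) : pol sp im 0 = 0 := by
  simp [pol]

lemma pol_add (sp : SkewPoly R S σ δ) (im : Induced R S M N sp) (c d : ℕ →₀ M) :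
    pol sp im (c + d) = pol sp im c + pol sp im d := by
  unfold pol
  apply Finsupp.sum_add_index' <;> intros <;> simp [smul_add]

/-- `pol` as an additive hom. -/
def polHom (sp : SkewPoly R S σ δ) (im : Induced R S M N sp) : (ℕ →₀ M) →+ N where
  toFun := pol sp im
  map_zero' := pol_zero sp im
  map_add' := pol_add sp im

lemma pol_injective (sp : SkewPoly R S σ δ) (im : Induced R S M N sp) :
    Function.Injective (pol sp im) := im.free.injective

lemma pol_ne_zero (sp : SkewPoly R S σ δ) (im : Induced R S M N sp) {c : ℕ →₀ M}
    (hc : c ≠ 0) : pol sp im c ≠ 0 := by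
  intro h
  exact hc (pol_injective sp im (h.trans (pol_zero sp im).symm))

lemma pol_single (sp : SkewPoly R S σ δ) (im : Induced R S M N sp) (i : ℕ) (m : M) :
    pol sp im (Finsupp.single i m) = op (sp.x ^ i) • im.j m := by
  unfold pol
  exact Finsupp.sum_single_index (by simp)

/-- key computation: right multiplication of `(j m)·xⁱ` by `r` is a polynomial of
degree ≤ `i`. -/
lemma key (sp : SkewPoly R S σ δ) (im : Induced R S M N sp) :
    ∀ (i : ℕ) (r : R) (m : M), ∃ d : ℕ →₀ M, (∀ l, i < l → d l = 0) ∧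
      op (sp.ι r) • (op (sp.x ^ i) • im.j m) = pol sp im d := by
  intro i
  induction i with
  | zero =>
    intro r m
    refine ⟨Finsupp.single 0 (op r • m), ?_, ?_⟩
    · intro l hl
      rw [Finsupp.single_apply_eq_zero]
      intro h; omega
    · rw [pol_single, pow_zero, op_one, one_smul, one_smul, im.j_smul]
  | succ i IH =>
    intro r m
    obtain ⟨d₁, hd₁b, hd₁⟩ := IH (σ r) m
    obtain ⟨d₂, hd₂b, hd₂⟩ := IH (δ r) m
    refine ⟨Finsupp.mapDomain Nat.succ d₁ + d₂, ?_, ?_⟩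
    · intro l hl
      rw [Finsupp.add_apply]
      obtain ⟨l', rfl⟩ : ∃ l', l = l' + 1 := ⟨l - 1, by omega⟩
      rw [show l' + 1 = Nat.succ l' from rfl,
        Finsupp.mapDomain_apply Nat.succ_injective, hd₁b l' (by omega),
        hd₂b _ (by omega), add_zero]
    · have e1 : op (sp.ι r) • (op (sp.x ^ (i + 1)) • im.j m)
          = op (sp.x ^ i * (sp.ι (σ r) * sp.x)) • im.j m
            + op (sp.x ^ i * sp.ι (δ r)) • im.j m := by
        rw [smul_smul, ← op_mul]
        have hx : sp.x ^ (i + 1) * sp.ι r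
            = sp.x ^ i * (sp.ι (σ r) * sp.x) + sp.x ^ i * sp.ι (δ r) := by
          rw [pow_succ, mul_assoc, sp.comm r, mul_add]
        rw [hx, op_add, add_smul]
      have e2 : op (sp.x ^ i * sp.ι (δ r)) • im.j m = pol sp im d₂ := by
        rw [← hd₂, smul_smul, ← op_mul]
      have e3 : op (sp.x ^ i * (sp.ι (σ r) * sp.x)) • im.j m
          = op sp.x • pol sp im d₁ := by
        rw [← hd₁, smul_smul, smul_smul, ← op_mul, ← op_mul]
      have e4 : op sp.x • pol sp im d₁ = pol sp im (Finsupp.mapDomain Nat.succ d₁) := by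
        unfold pol
        rw [Finsupp.sum_mapDomain_index (by simp) (by intros; rw [map_add, smul_add]),
          Finsupp.sum, Finsupp.sum, Finset.smul_sum]
        apply Finset.sum_congr rfl
        intro l _
        rw [smul_smul, ← op_mul, ← pow_succ]
      rw [e1, e2, e3, e4, ← pol_add]

/-- right multiplication by `r` does not increase degree. -/
lemma keyc (sp : SkewPoly R S σ δ) (im : Induced R S M N sp) (c : ℕ →₀ M) (k : ℕ)
    (hc : ∀ i, k < i → c i = 0) (r : R) :
    ∃ d : ℕ →₀ M, (∀ l, k < l → d l = 0) ∧ op (sp.ι r) • pol sp im c = pol sp im d := by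
  classical
  choose f hf1 hf2 using key sp im
  refine ⟨∑ i ∈ c.support, f i r (c i), ?_, ?_⟩
  · intro l hl
    rw [Finsupp.finset_sum_apply]
    apply Finset.sum_eq_zero
    intro i hi
    have hik : i ≤ k := by
      by_contra h
      exact (Finsupp.mem_support_iff.mp hi) (hc i (by omega))
    exact hf1 i r (c i) l (by omega)
  · rw [show (∑ i ∈ c.support, f i r (c i) : ℕ →₀ M) =
        ∑ i ∈ c.support, f i r (c i) from rfl]
    rw [show pol sp im (∑ i ∈ c.support, f i r (c i))
        = ∑ i ∈ c.support, pol sp im (f i r (c i)) from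
      map_sum (polHom sp im) _ _]
    unfold pol
    rw [Finsupp.sum, Finset.smul_sum]
    apply Finset.sum_congr rfl
    intro i _
    exact hf2 i r (c i)

lemma exists_degEq_le (sp : SkewPoly R S σ δ) (im : Induced R S M N sp) (d : ℕ →₀ M)
    (K : ℕ) (hd : ∀ i, K < i → d i = 0) (h : pol sp im d ≠ 0) :
    ∃ k, k ≤ K ∧ DegEq sp im (pol sp im d) k := by
  have hd0 : d ≠ 0 := by rintro rfl; exact h (pol_zero sp im)
  have hne : d.support.Nonempty := Finsupp.support_nonempty_iff.mpr hd0
  refine ⟨d.support.max' hne, ?_, d, rfl, ?_, ?_⟩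
  · by_contra hK
    exact (Finsupp.mem_support_iff.mp (d.support.max'_mem hne)) (hd _ (by omega))
  · exact Finsupp.mem_support_iff.mp (d.support.max'_mem hne)
  · intro i hi
    by_contra hzi
    exact absurd (Finset.le_max' _ i (Finsupp.mem_support_iff.mpr hzi)) (by omega)

lemma degEq_ne_zero (sp : SkewPoly R S σ δ) (im : Induced R S M N sp) {ν : N} {k : ℕ}
    (h : DegEq sp im ν k) : ν ≠ 0 := by
  obtain ⟨c, hc, hck, -⟩ := h
  rw [← hc]
  exact pol_ne_zero sp im (fun h0 => hck (by rw [h0]; rfl))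

lemma degEq_unique (sp : SkewPoly R S σ δ) (im : Induced R S M N sp) {ν : N} {k k' : ℕ}
    (h : DegEq sp im ν k) (h' : DegEq sp im ν k') : k = k' := by
  obtain ⟨c, hc, hck, hcb⟩ := h
  obtain ⟨c', hc', hck', hcb'⟩ := h'
  have : c = c' := pol_injective sp im (hc.trans hc'.symm)
  subst this
  by_contra hne
  rcases Nat.lt_or_ge k k' with hlt | hge
  · exact hck' (hcb k' hlt)
  · exact hck (hcb' k (by omega))

/-- for every nonzero `m ∈ M ⊗_R S` there exists `r ∈ R` such that `m·r` is a
nonzero good polynomial. -/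
theorem stmt6 (sp : SkewPoly R S σ δ) (im : Induced R S M N sp) (hδ : IsSigmaDeriv σ δ)
    (ν : N) (hν : ν ≠ 0) :
    ∃ r : R, op (sp.ι r) • ν ≠ 0 ∧ Good sp im (op (sp.ι r) • ν) := by
  obtain ⟨c, hc⟩ := im.free.surjective ν
  have hpc : pol sp im c = ν := hc
  have hc0 : pol sp im c ≠ 0 := by rw [hpc]; exact hν
  obtain ⟨k, -, hk⟩ := exists_degEq_le sp im c (c.support.sup id)
    (fun i hi => by
      by_contra h
      have := Finset.le_sup (f := id) (Finsupp.mem_support_iff.mpr h)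
      simp only [id] at this
      omega) hc0
  rw [hpc] at hk
  clear hν hc0 hpc hc c
  induction k using Nat.strong_induction_on generalizing ν with
  | _ k IH =>
    by_cases h : ∀ r : R, op (sp.ι r) • ν ≠ 0 → DegEq sp im (op (sp.ι r) • ν) k
    · have h1 : op (sp.ι 1) • ν = ν := by
        rw [map_one, op_one, one_smul]
      refine ⟨1, ?_, k, ?_, ?_⟩
      · rw [h1]; exact degEq_ne_zero sp im hk
      · rw [h1]; exact hk
      · intro r hr
        rw [h1] at hr ⊢
        exact h r hr
    · push_neg at h
      obtain ⟨r, hr0, hrk⟩ := h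
      obtain ⟨cc, hcp, hck, hcb⟩ := hk
      obtain ⟨d, hd, hde⟩ := keyc sp im cc k hcb r
      rw [hcp] at hde
      obtain ⟨k', hk'K, hk'⟩ := exists_degEq_le sp im d k hd (by rw [← hde]; exact hr0)
      rw [← hde] at hk'
      have hne : k' ≠ k := fun hkk => hrk (hkk ▸ hk')
      obtain ⟨r', hr'0, hr'good⟩ := IH k' (lt_of_le_of_ne hk'K hne) _ hk'
      have heq : op (sp.ι (r * r')) • ν = op (sp.ι r') • (op (sp.ι r) • ν) := by
        rw [smul_smul, ← op_mul, ← map_mul]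
      exact ⟨r * r', by rw [heq]; exact hr'0, by rw [heq]; exact hr'good⟩
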